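/- Let n ≥ 2, m ≥ 3, and let P be a regular m-th order, n-dimensional stochastic tensor on S = {1,…,n}, with limiting probability distribution π (i.e., lim_{k→∞} p^{(k)}_{i1 i2 … i_m} = π_{i1} for all indices). Let ξ be any stationary distribution of the reduced first order chain: ξ is indexed by (m−1)-tuples from S, ξ ≥ 0 entrywise, the entries of ξ sum to 1, and Qξ = ξ where Q is the reduced transition matrix of P. Then for every i1 ∈ S, π_{i1} = Σ_{j2,…,j_{m−1} ∈ S} ξ_{(i1, j2, …, j_{m−1})}. (This is the identity π = P^{(0)} ξ, where P^{(0)} is the mode-1 matricization of the identity tensor.) -/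

import Mathlib

open Finset

/-- An `m`-th order, `n`-dimensional tensor with `m = r + 2`: the entry
`p_{i₁ i₂ … i_m}` is written `P i₁ t`, where `t = (i₂, …, i_m)` is the tail of
`m - 1 = r + 1` indices. -/
abbrev HOTensor (n r : ℕ) := Fin n → (Fin (r + 1) → Fin n) → ℝ

/-- `P` is a stochastic tensor. -/
def IsStochasticT {n r : ℕ} (P : HOTensor n r) : Prop :=
  (∀ i t, 0 ≤ P i t ∧ P i t ≤ 1) ∧ ∀ t, ∑ i : Fin n, P i t = 1

/-- The product `A ⊠ B`:
`(A ⊠ B)_{i₁ i₂ … i_m} = Σ_j a_{i₁ j i₂ … i_{m-1}} b_{j i₂ … i_m}`. -/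
def tmul {n r : ℕ} (A B : HOTensor n r) : HOTensor n r :=
  fun i t => ∑ j : Fin n, A i (Fin.cons j (Fin.init t)) * B j t

/-- Tensor powers: `tpow P k` is `P^k`, with entries the `k`-step transition
probabilities `p^{(k)}_{i₁ … i_m}`; `P^0` is the identity tensor. -/
def tpow {n r : ℕ} (P : HOTensor n r) : ℕ → HOTensor n r
  | 0 => fun i t => if i = t 0 then 1 else 0
  | k + 1 => tmul (tpow P k) P

/-- `fpp P k` is the `(k+1)`-step first passage probability tensor `F^{[k+1]}`:
`f^{[1]} = p`, and `f^{[k+1]}_{i₁ i₂ … i_m} = Σ_{j ≠ i₁} f^{[k]}_{i₁ j i₂ … i_{m-1}} p_{j i₂ … i_m}`. -/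
def fpp {n r : ℕ} (P : HOTensor n r) : ℕ → HOTensor n r
  | 0 => P
  | k + 1 => fun i t =>
      ∑ j ∈ Finset.univ.filter (fun j => j ≠ i), fpp P k i (Fin.cons j (Fin.init t)) * P j t

/-- The ever-reaching probability `f_{i₁ i₂ … i_m} = Σ_{k=1}^∞ f^{[k]}_{i₁ i₂ … i_m}`. -/
noncomputable def everReach {n r : ℕ} (P : HOTensor n r) : HOTensor n r :=
  fun i t => ∑' k : ℕ, fpp P k i t

/-- State `j` is reachable from state `i` (`i → j`): for every choice of
`i₃, …, i_m` there is `k ≥ 0` with `p^{(k)}_{j i i₃ … i_m} > 0`. -/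
def Reach {n r : ℕ} (P : HOTensor n r) (i j : Fin n) : Prop :=
  ∀ u : Fin r → Fin n, ∃ k : ℕ, 0 < tpow P k j (Fin.cons i u)

/-- States `i` and `j` communicate (`i ↔ j`). -/
def Comm {n r : ℕ} (P : HOTensor n r) (i j : Fin n) : Prop :=
  Reach P i j ∧ Reach P j i

/-- State `i` is recurrent: `f_{i i i₃ … i_m} = 1` for all `i₃, …, i_m`. -/
def RecurrentState {n r : ℕ} (P : HOTensor n r) (i : Fin n) : Prop :=
  ∀ u : Fin r → Fin n, everReach P i (Fin.cons i u) = 1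

/-- State `i` is fully transient: `f_{i i i₃ … i_m} < 1` for all `i₃, …, i_m`. -/
def FullyTransientState {n r : ℕ} (P : HOTensor n r) (i : Fin n) : Prop :=
  ∀ u : Fin r → Fin n, everReach P i (Fin.cons i u) < 1

/-- `P` is ergodic: for all indices there is `k ≥ 1` with `p^{(k)}_{i₁ … i_m} > 0`. -/
def ErgodicT {n r : ℕ} (P : HOTensor n r) : Prop :=
  ∀ (i : Fin n) (t : Fin (r + 1) → Fin n), ∃ k : ℕ, 1 ≤ k ∧ 0 < tpow P k i t

/-- `P` is regular: some power `P^k`, `k ≥ 1`, has all entries positive. -/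
def RegularT {n r : ℕ} (P : HOTensor n r) : Prop :=
  ∃ k : ℕ, 1 ≤ k ∧ ∀ (i : Fin n) (t : Fin (r + 1) → Fin n), 0 < tpow P k i t

/-- The reduced transition matrix `Q` of `P`: rows and columns are indexed by
`(m-1)`-tuples; the entry in row `(i₁, …, i_{m-1})` and column `(j₁, …, j_{m-1})`
is `p_{i₁ i₂ … i_{m-1} j_{m-1}}` if `j_ℓ = i_{ℓ+1}` for `ℓ = 1, …, m-2`, else `0`. -/
def reducedT {n r : ℕ} (P : HOTensor n r) :
    Matrix (Fin (r + 1) → Fin n) (Fin (r + 1) → Fin n) ℝ :=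
  fun u v =>
    if ∀ ℓ : Fin r, v ℓ.castSucc = u ℓ.succ then
      P (u 0) (Fin.snoc (Fin.tail u) (v (Fin.last r)))
    else 0

/-!
Row `u` of the reduced matrix `Q` moves the window `u = (i₁, …, i_{m-1})` one step, so the
rows of `Q^k` beginning with `i₁`, summed over the rest of the window, give the `k`-step
probabilities: `Σ_w (Q^k)_{(i₁,w), v} = p^{(k)}_{i₁ v}`. Summing `Q^k ξ = ξ` over the rows
beginning with `i₁` therefore gives `Σ_w ξ_{(i₁,w)} = Σ_v p^{(k)}_{i₁ v} ξ_v` for every `k`,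
and letting `k → ∞` the right side tends to `π_{i₁} Σ_v ξ_v = π_{i₁}`.
-/

open Matrix

theorem Matrix.pow_mulVec_eq_self {ι R : Type*} [Fintype ι] [DecidableEq ι] [Semiring R]
    {A : Matrix ι ι R} {x : ι → R} (hx : A *ᵥ x = x) (k : ℕ) : (A ^ k) *ᵥ x = x := by
  induction k with
  | zero => exact one_mulVec x
  | succ k ih => rw [pow_succ, ← mulVec_mulVec, hx, ih]

theorem Fintype.sum_fin_succ_pi {α M : Type*} [Fintype α] [AddCommMonoid M] {r : ℕ}
    (f : (Fin (r + 1) → α) → M) :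
    ∑ u, f u = ∑ j, ∑ w : Fin r → α, f (Fin.cons j w) := by
  rw [← Fintype.sum_prod_type']
  exact (Fintype.sum_equiv (Fin.consEquiv fun _ => α) _ f fun _ => rfl).symm

section ReducedChain

variable {n r : ℕ} (P : HOTensor n r)

theorem reducedT_cons_apply (j : Fin n) (w : Fin r → Fin n) (v : Fin (r + 1) → Fin n) :
    reducedT P (Fin.cons j w) v = if w = Fin.init v then P j v else 0 := by
  have hshift : (∀ ℓ : Fin r, v ℓ.castSucc = (Fin.cons j w : Fin (r + 1) → Fin n) ℓ.succ) ↔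
      w = Fin.init v := by
    simp only [Fin.cons_succ, funext_iff, Fin.init, eq_comm]
  unfold reducedT
  by_cases h : w = Fin.init v
  · rw [if_pos (hshift.mpr h), if_pos h, h, Fin.cons_zero, Fin.tail_cons, Fin.snoc_init_self]
  · rw [if_neg (mt hshift.mp h), if_neg h]

theorem sum_reducedT_pow_cons (i : Fin n) (k : ℕ) (v : Fin (r + 1) → Fin n) :
    ∑ w : Fin r → Fin n, (reducedT P ^ k) (Fin.cons i w) v = tpow P k i v := by
  induction k generalizing v with
  | zero =>
    obtain ⟨a, t, rfl⟩ : ∃ a t, v = Fin.cons a t := ⟨_, _, (Fin.cons_self_tail v).symm⟩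
    simp [tpow, one_apply, ite_and]
  | succ k ih =>
    calc ∑ w, (reducedT P ^ (k + 1)) (Fin.cons i w) v
        = ∑ u, tpow P k i u * reducedT P u v := by
          simp only [pow_succ, mul_apply]
          rw [Finset.sum_comm]
          simp only [← Finset.sum_mul, ih]
      _ = ∑ j, tpow P k i (Fin.cons j (Fin.init v)) * P j v := by
          rw [Fintype.sum_fin_succ_pi]
          simp [reducedT_cons_apply, mul_ite]
      _ = tpow P (k + 1) i v := rfl

theorem sum_cons_eq_sum_tpow_mul_of_stationary {ξ : (Fin (r + 1) → Fin n) → ℝ}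
    (hstat : reducedT P *ᵥ ξ = ξ) (i : Fin n) (k : ℕ) :
    ∑ w : Fin r → Fin n, ξ (Fin.cons i w) = ∑ v, tpow P k i v * ξ v := by
  calc ∑ w : Fin r → Fin n, ξ (Fin.cons i w)
      = ∑ w : Fin r → Fin n, ∑ v, (reducedT P ^ k) (Fin.cons i w) v * ξ v :=
        Finset.sum_congr rfl fun w _ => (congrFun (pow_mulVec_eq_self hstat k) _).symm
    _ = ∑ v, tpow P k i v * ξ v := by
        rw [Finset.sum_comm]
        simp only [← Finset.sum_mul, sum_reducedT_pow_cons]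

end ReducedChain

theorem limiting_from_stationary_general (n r : ℕ)
    (P : HOTensor n r)
    (π : Fin n → ℝ)
    (hπ : ∀ (i : Fin n) (t : Fin (r + 1) → Fin n),
      Filter.Tendsto (fun k : ℕ => tpow P k i t) Filter.atTop (nhds (π i)))
    (ξ : (Fin (r + 1) → Fin n) → ℝ)
    (hξ1 : ∑ u : Fin (r + 1) → Fin n, ξ u = 1)
    (hstat : (reducedT P).mulVec ξ = ξ) :
    ∀ i : Fin n, π i = ∑ w : Fin r → Fin n, ξ (Fin.cons i w) := by
  intro i
  have hlim : Filter.Tendsto (fun k => ∑ v, tpow P k i v * ξ v) Filter.atTop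
      (nhds (∑ v, π i * ξ v)) :=
    tendsto_finsetSum _ fun v _ => (hπ i v).mul tendsto_const_nhds
  simp only [← sum_cons_eq_sum_tpow_mul_of_stationary P hstat i, ← Finset.mul_sum, hξ1,
    mul_one] at hlim
  exact tendsto_nhds_unique hlim tendsto_const_nhds

/-- for a regular chain with limiting distribution `π`, and any
stationary distribution `ξ` of the reduced chain (`Qξ = ξ`, `ξ ≥ 0`, entries sum
to `1`), one has `π_{i₁} = Σ_{j₂,…,j_{m-1}} ξ_{(i₁, j₂, …, j_{m-1})}`. -/
theorem limiting_from_stationary (n r : ℕ) (hn : 2 ≤ n) (hr : 1 ≤ r)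
    (P : HOTensor n r) (hP : IsStochasticT P) (hreg : RegularT P)
    (π : Fin n → ℝ)
    (hπ : ∀ (i : Fin n) (t : Fin (r + 1) → Fin n),
      Filter.Tendsto (fun k : ℕ => tpow P k i t) Filter.atTop (nhds (π i)))
    (ξ : (Fin (r + 1) → Fin n) → ℝ)
    (hξ0 : ∀ u, 0 ≤ ξ u) (hξ1 : ∑ u : Fin (r + 1) → Fin n, ξ u = 1)
    (hstat : (reducedT P).mulVec ξ = ξ) :
    ∀ i : Fin n, π i = ∑ w : Fin r → Fin n, ξ (Fin.cons i w) :=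
  limiting_from_stationary_general n r P π hπ ξ hξ1 hstat
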